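/- Let G be a finite simple graph on n ≥ 2 vertices with no isolated vertices. Then ⌈n/2⌉ ≤ γ(M(G)) ≤ n − 1, where γ denotes the domination number. -/

import Mathlib

/-!
A vertex of `M(G)` dominates at most two vertices of `G`: itself, or the two ends of an edge.
Hence a dominating set of `M(G)` has at least `n / 2` elements. Conversely, for an edge `ab`
of `G`, the edge `ab` together with the other `n - 2` vertices dominates `M(G)`: every other
edge of `G` has an end outside `{a, b}`.
-/

/-- `S` is a dominating set of the graph `H`. -/
def IsDomSet {V : Type*} (H : SimpleGraph V) (S : Set V) : Prop :=
  ∀ v : V, v ∈ S ∨ ∃ s ∈ S, H.Adj v s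

/-- The domination number of a graph `H`. -/
noncomputable def domNum {V : Type*} (H : SimpleGraph V) : ℕ :=
  sInf {k : ℕ | ∃ S : Set V, IsDomSet H S ∧ S.ncard = k}

/-- The middle graph `M(G)` of a graph `G`: its vertices are the vertices and edges
of `G`; a vertex is adjacent to the edges incident to it, and two edges are adjacent
iff they are distinct and share an endpoint. -/
def middleGraph {V : Type*} (G : SimpleGraph V) : SimpleGraph (V ⊕ G.edgeSet) where
  Adj x y :=
    match x, y with
    | Sum.inl _, Sum.inl _ => False
    | Sum.inl v, Sum.inr e => v ∈ (e : Sym2 V)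
    | Sum.inr e, Sum.inl v => v ∈ (e : Sym2 V)
    | Sum.inr e, Sum.inr f => e ≠ f ∧ ∃ v, v ∈ (e : Sym2 V) ∧ v ∈ (f : Sym2 V)
  symm := by
    constructor
    rintro (v | e) (w | f) h
    · exact h.elim
    · exact h
    · exact h
    · exact ⟨Ne.symm h.1, h.2.imp fun v hv => ⟨hv.2, hv.1⟩⟩
  loopless := by
    constructor
    rintro (v | e) h
    · exact h.elim
    · exact h.1 rfl

section Domination

variable {W : Type*} (H : SimpleGraph W)

lemma isDomSet_univ : IsDomSet H Set.univ := fun _ => Or.inl trivial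

lemma domNum_le_ncard {S : Set W} (hS : IsDomSet H S) : domNum H ≤ S.ncard :=
  Nat.sInf_le ⟨S, hS, rfl⟩

lemma exists_isDomSet_ncard_eq_domNum : ∃ S : Set W, IsDomSet H S ∧ S.ncard = domNum H :=
  Nat.sInf_mem (s := {k | ∃ S : Set W, IsDomSet H S ∧ S.ncard = k})
    ⟨_, Set.univ, isDomSet_univ H, rfl⟩

end Domination

namespace middleGraph

variable {V : Type*} (G : SimpleGraph V)

def dominatedVertices (x : V ⊕ G.edgeSet) : Set V :=
  {v | Sum.inl v = x ∨ (middleGraph G).Adj (Sum.inl v) x}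

lemma ncard_dominatedVertices_le_two (x : V ⊕ G.edgeSet) :
    (dominatedVertices G x).ncard ≤ 2 := by
  classical
  rcases x with w | ⟨z, -⟩
  · have : dominatedVertices G (Sum.inl w) = {w} := by
      ext v
      simp [dominatedVertices, middleGraph]
    simp [this]
  · have : dominatedVertices G (Sum.inr ⟨z, ‹_›⟩) = z.toFinset := by
      ext v
      simp [dominatedVertices, middleGraph]
    rw [this, Set.ncard_coe_finset, Sym2.card_toFinset]
    split_ifs <;> omega

lemma card_le_two_mul_ncard_of_isDomSet [Fintype V] {S : Set (V ⊕ G.edgeSet)}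
    (hS : IsDomSet (middleGraph G) S) : Fintype.card V ≤ 2 * S.ncard := by
  set F := S.toFinite.toFinset
  have hcover : Set.univ ⊆ ⋃ x ∈ F, dominatedVertices G x := by
    intro v _
    simp only [Set.mem_iUnion, Set.Finite.mem_toFinset, F]
    rcases hS (Sum.inl v) with hv | ⟨x, hx, hadj⟩
    · exact ⟨_, hv, Or.inl rfl⟩
    · exact ⟨x, hx, Or.inr hadj⟩
  calc Fintype.card V = (Set.univ : Set V).ncard := by
        rw [Set.ncard_univ, Nat.card_eq_fintype_card]
    _ ≤ (⋃ x ∈ F, dominatedVertices G x).ncard := Set.ncard_le_ncard hcover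
    _ ≤ ∑ x ∈ F, (dominatedVertices G x).ncard := F.set_ncard_biUnion_le _
    _ ≤ ∑ _x ∈ F, 2 := Finset.sum_le_sum fun x _ => ncard_dominatedVertices_le_two G x
    _ = 2 * S.ncard := by
        rw [Finset.sum_const, smul_eq_mul, mul_comm, Set.ncard_eq_toFinset_card S]

variable {G}

def edgeDomSet {a b : V} (hab : G.Adj a b) : Set (V ⊕ G.edgeSet) :=
  insert (Sum.inr ⟨s(a, b), hab⟩) (Sum.inl '' {a, b}ᶜ)

lemma isDomSet_edgeDomSet {a b : V} (hab : G.Adj a b) :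
    IsDomSet (middleGraph G) (edgeDomSet hab) := by
  rintro (v | ⟨z, hz⟩)
  · by_cases hv : v ∈ ({a, b} : Set V)
    · exact Or.inr ⟨_, Set.mem_insert _ _, by simpa [middleGraph, Sym2.mem_iff] using hv⟩
    · exact Or.inl (Set.mem_insert_of_mem _ (Set.mem_image_of_mem _ hv))
  induction z using Sym2.ind with
  | _ x y =>
    by_cases hx : x ∈ ({a, b} : Set V)ᶜ
    · exact Or.inr
        ⟨_, Set.mem_insert_of_mem _ (Set.mem_image_of_mem _ hx), Sym2.mem_mk_left x y⟩
    by_cases hy : y ∈ ({a, b} : Set V)ᶜ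
    · exact Or.inr
        ⟨_, Set.mem_insert_of_mem _ (Set.mem_image_of_mem _ hy), Sym2.mem_mk_right x y⟩
    have hxy : x ≠ y := G.ne_of_adj hz
    have hedge : s(x, y) = s(a, b) := by
      simp only [Set.mem_compl_iff, not_not, Set.mem_insert_iff, Set.mem_singleton_iff] at hx hy
      rcases hx with rfl | rfl <;> rcases hy with rfl | rfl
      all_goals first | exact absurd rfl hxy | rfl | exact Sym2.eq_swap
    exact Or.inl (Set.mem_insert_iff.mpr (Or.inl (congrArg Sum.inr (Subtype.ext hedge))))

lemma ncard_edgeDomSet_le [Fintype V] {a b : V} (hab : G.Adj a b) :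
    (edgeDomSet hab).ncard ≤ Fintype.card V - 1 := by
  have hpair : ({a, b} : Set V).ncard = 2 := Set.ncard_pair (G.ne_of_adj hab)
  have hcompl : (({a, b} : Set V)ᶜ).ncard = Fintype.card V - 2 := by
    rw [Set.ncard_compl, hpair, Nat.card_eq_fintype_card]
  have htwo : 2 ≤ Fintype.card V := by
    simpa [hpair] using Set.ncard_le_ncard (Set.subset_univ ({a, b} : Set V))
  calc (edgeDomSet hab).ncard
        ≤ (Sum.inl '' ({a, b} : Set V)ᶜ : Set (V ⊕ G.edgeSet)).ncard + 1 :=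
          Set.ncard_insert_le _ _
    _ = Fintype.card V - 2 + 1 := by rw [Set.ncard_image_of_injective _ Sum.inl_injective, hcompl]
    _ = Fintype.card V - 1 := by omega

end middleGraph

/-- For a graph `G` on `n ≥ 2` vertices with no isolated vertices,
`⌈n/2⌉ ≤ γ(M(G)) ≤ n - 1`. -/
theorem domNum_middle_bounds {V : Type*} [Fintype V] (G : SimpleGraph V) (n : ℕ)
    (hord : Fintype.card V = n) (hn : 2 ≤ n)
    (hiso : ∀ v : V, ∃ w : V, G.Adj v w) :
    (n + 1) / 2 ≤ domNum (middleGraph G) ∧ domNum (middleGraph G) ≤ n - 1 := by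
  subst hord
  obtain ⟨S, hS, hSmin⟩ := exists_isDomSet_ncard_eq_domNum (middleGraph G)
  have hlower := middleGraph.card_le_two_mul_ncard_of_isDomSet G hS
  obtain ⟨a⟩ : Nonempty V := Fintype.card_pos_iff.mp (by omega)
  obtain ⟨b, hab⟩ := hiso a
  have hupper := (domNum_le_ncard _ (middleGraph.isDomSet_edgeDomSet hab)).trans
    (middleGraph.ncard_edgeDomSet_le hab)
  omega
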